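/- Let k > 1/2 and φ smooth with c ≤ φ(ξ)/ξ ≤ C on (0,1]. Let m be a real number with 0 ≤ m < k + 1/2. If g is smooth on (0,1] with g(1) = 0, g/ξ^{m−1} ∈ L²(0,1), and V*(g)/ξ^{m−1} ∈ L²(0,1), then g/ξ^m ∈ L²(0,1) and ‖g/ξ^m‖_{L²} ≤ C' ‖ξ/φ‖_{L^∞}^{2k} ‖V*(g)/ξ^{m−1}‖_{L²} + ‖g/ξ^{m−1}‖_{L²}. -/

import Mathlib

open MeasureTheory Set
open Filter Topology

/-- `V*(g)(ξ) = -φ^{2k} ξ^{-k} ∂_ξ(ξ^{-k} g)`. -/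
noncomputable def Vstar (k : ℝ) (φ g : ℝ → ℝ) (ξ : ℝ) : ℝ :=
  -(φ ξ ^ (2 * k)) * ξ ^ (-k) * deriv (fun x => x ^ (-k) * g x) ξ

private lemma young_aux (p a b : ℝ) (hp : 0 < p) : 2*(a*b) ≤ p/2*a^2 + 2/p*b^2 := by
  rw [← sub_nonneg]
  have e : p/2*a^2 + 2/p*b^2 - 2*(a*b) = (p*a - 2*b)^2 / (2*p) := by
    field_simp; ring
  rw [e]; positivity

private lemma claimA (ξ G k m p : ℝ) (hξ : 0 < ξ) (hp : p = 2*k - 2*m + 1) :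
    ξ ^ (p-1) * (ξ ^ (-k) * G)^2 = (G / ξ ^ m)^2 := by
  rw [div_pow, mul_pow, ← Real.rpow_natCast (ξ ^ (-k)), ← Real.rpow_natCast (ξ ^ m),
    ← Real.rpow_mul hξ.le, ← Real.rpow_mul hξ.le]
  rw [eq_div_iff (by positivity : ξ ^ (m*((2:ℕ):ℝ)) ≠ 0)]
  rw [show ξ ^ (p-1) * (ξ ^ (-k*((2:ℕ):ℝ)) * G^2) * ξ ^ (m*((2:ℕ):ℝ))
      = (ξ ^ (p-1) * ξ ^ (-k*((2:ℕ):ℝ)) * ξ ^ (m*((2:ℕ):ℝ))) * G^2 by ring,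
    ← Real.rpow_add hξ, ← Real.rpow_add hξ]
  have : p - 1 + -k * ((2:ℕ):ℝ) + m * ((2:ℕ):ℝ) = 0 := by push_cast; rw [hp]; ring
  rw [this, Real.rpow_zero, one_mul]

private lemma claimB (ξ G d f k m p : ℝ) (hξ : 0 < ξ) (hf : 0 < f) (hp : p = 2*k - 2*m + 1) :
    ξ ^ p * (2 * (ξ ^ (-k) * G) * d)
      = -(2 * (G / ξ ^ m) * ((ξ / f) ^ (2*k)) * ((-(f ^ (2*k)) * ξ ^ (-k) * d) / ξ ^ (m-1))) := by
  have h1 : ξ ^ m ≠ 0 := by positivity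
  have h2 : ξ ^ (m-1) ≠ 0 := by positivity
  have h3 : f ^ (2*k) ≠ 0 := by positivity
  rw [Real.div_rpow hξ.le hf.le]
  field_simp
  ring_nf
  rw [show ξ ^ p * G * d * ξ ^ m * ξ ^ (-1 + m)
      = (ξ^p * ξ^m * ξ^(-1+m)) * (G * d) from by ring,
    ← Real.rpow_add hξ, ← Real.rpow_add hξ,
    show p + m + (-1 + m) = k * 2 from by rw [hp]; ring]
  ring


private lemma claimC (ξ G d f k m p : ℝ) (hξ : 0 < ξ) (hf : 0 < f) (hp : p = 2*k - 2*m + 1) :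
    p * (G / ξ ^ m)^2 - 2 * (G / ξ ^ m) * ((ξ / f) ^ (2*k)) * ((-(f ^ (2*k)) * ξ ^ (-k) * d) / ξ ^ (m-1))
      = p * ξ ^ (p-1) * (ξ ^ (-k) * G)^2 + ξ ^ p * (2 * (ξ ^ (-k) * G) * d) := by
  rw [sub_eq_add_neg, ← claimB ξ G d f k m p hξ hf hp, ← claimA ξ G k m p hξ hp]; ring

/-- weighted estimate for `V*`. -/
theorem weighted_estimate_for_Vstar (k m : ℝ) (hk : 1 / 2 < k) (hm : 0 ≤ m)
    (hmk : m < k + 1 / 2) :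
    ∃ C' : ℝ, 0 < C' ∧
      ∀ (φ g : ℝ → ℝ) (c C S : ℝ), 0 < c → c ≤ C →
        ContDiff ℝ (⊤ : ℕ∞) φ →
        (∀ ξ ∈ Ioc (0:ℝ) 1, c ≤ φ ξ / ξ ∧ φ ξ / ξ ≤ C) →
        (∀ ξ ∈ Ioc (0:ℝ) 1, ξ / φ ξ ≤ S) →
        ContDiffOn ℝ (⊤ : ℕ∞) g (Ioc (0:ℝ) 1) → g 1 = 0 →
        IntegrableOn (fun ξ => (g ξ / ξ ^ (m - 1)) ^ 2) (Ioo (0:ℝ) 1) →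
        IntegrableOn (fun ξ => (Vstar k φ g ξ / ξ ^ (m - 1)) ^ 2) (Ioo (0:ℝ) 1) →
        IntegrableOn (fun ξ => (g ξ / ξ ^ m) ^ 2) (Ioo (0:ℝ) 1) ∧
          Real.sqrt (∫ ξ in Ioo (0:ℝ) 1, (g ξ / ξ ^ m) ^ 2) ≤
            C' * S ^ (2 * k) *
              Real.sqrt (∫ ξ in Ioo (0:ℝ) 1, (Vstar k φ g ξ / ξ ^ (m - 1)) ^ 2)
            + Real.sqrt (∫ ξ in Ioo (0:ℝ) 1, (g ξ / ξ ^ (m - 1)) ^ 2) := by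
  have hp0 : (0:ℝ) < 2*k - 2*m + 1 := by linarith
  set p : ℝ := 2*k - 2*m + 1 with hpdef
  refine ⟨2/p, by positivity, ?_⟩
  intro φ g c C S hc hcC hφ hbound hS hg hg1 hint1 hint2
  have hφpos : ∀ ξ ∈ Ioc (0:ℝ) 1, 0 < φ ξ := by
    intro ξ hξ
    have h1 : 0 < φ ξ / ξ := lt_of_lt_of_le hc (hbound ξ hξ).1
    have h2 := mul_pos h1 hξ.1
    rwa [div_mul_cancel₀ _ hξ.1.ne'] at h2
  have hS0 : 0 < S := by
    have h1 : (1:ℝ) ∈ Ioc (0:ℝ) 1 := ⟨one_pos, le_refl 1⟩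
    exact lt_of_lt_of_le (div_pos one_pos (hφpos 1 h1)) (hS 1 h1)
  set s : ℝ := S ^ (2*k) with hsdef
  have hs0 : 0 < s := Real.rpow_pos_of_pos hS0 _
  set u : ℝ → ℝ := fun ξ => (g ξ / ξ ^ m) ^ 2 with hu
  set v : ℝ → ℝ := fun ξ => Vstar k φ g ξ / ξ ^ (m-1) with hv
  set F : ℝ → ℝ := fun x => x ^ p * (x ^ (-k) * g x)^2 with hF
  set D' : ℝ → ℝ := fun ξ => p * u ξ - 2 * (g ξ / ξ ^ m) * ((ξ / φ ξ) ^ (2*k)) * v ξ with hD'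
  -- differentiability
  have hgd : ∀ ξ ∈ Ioo (0:ℝ) 1, DifferentiableAt ℝ g ξ := fun ξ hξ =>
    ((hg.mono Ioo_subset_Ioc_self).differentiableOn (by simp)).differentiableAt
      (isOpen_Ioo.mem_nhds hξ)
  have hhd : ∀ ξ ∈ Ioo (0:ℝ) 1, HasDerivAt (fun x : ℝ => x ^ (-k) * g x)
      (deriv (fun x : ℝ => x ^ (-k) * g x) ξ) ξ := by
    intro ξ hξ
    exact (((Real.hasDerivAt_rpow_const (p := -k) (Or.inl hξ.1.ne')).differentiableAt).mul
      (hgd ξ hξ)).hasDerivAt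
  have key_deriv : ∀ ξ ∈ Ioo (0:ℝ) 1, HasDerivAt F (D' ξ) ξ := by
    intro ξ hξ
    have hξ0 : 0 < ξ := hξ.1
    have hφξ : 0 < φ ξ := hφpos ξ (Ioo_subset_Ioc_self hξ)
    have hfa : HasDerivAt (fun x : ℝ => x ^ p) (p * ξ ^ (p-1)) ξ :=
      Real.hasDerivAt_rpow_const (Or.inl hξ0.ne')
    have hh := hhd ξ hξ
    have hsq : HasDerivAt (fun x : ℝ => (x ^ (-k) * g x)^2)
        (2 * (ξ ^ (-k) * g ξ) * deriv (fun x : ℝ => x ^ (-k) * g x) ξ) ξ := by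
      simpa using hh.fun_pow 2
    have hF' := hfa.mul hsq
    have e3 := claimC ξ (g ξ) (deriv (fun x : ℝ => x ^ (-k) * g x) ξ) (φ ξ) k m p hξ0 hφξ hpdef
    have hDe : D' ξ = p * ξ ^ (p-1) * (ξ ^ (-k) * g ξ)^2
        + ξ ^ p * (2 * (ξ ^ (-k) * g ξ) * deriv (fun x : ℝ => x ^ (-k) * g x) ξ) := by
      simp only [hD', hu, hv, Vstar]
      exact e3
    rw [hDe]
    exact hF'
  -- continuity facts on Ioo
  have hgc : ContinuousOn g (Ioo (0:ℝ) 1) := hg.continuousOn.mono Ioo_subset_Ioc_self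
  have hrc : ∀ q : ℝ, ContinuousOn (fun x : ℝ => x ^ q) (Ioo (0:ℝ) 1) := fun q x hx =>
    (Real.continuousAt_rpow_const x q (Or.inl hx.1.ne')).continuousWithinAt
  have hdc : ContinuousOn (deriv (fun x : ℝ => x ^ (-k) * g x)) (Ioo (0:ℝ) 1) := by
    have hcd : ContDiffOn ℝ (⊤ : ℕ∞) (fun x : ℝ => x ^ (-k) * g x) (Ioo (0:ℝ) 1) := by
      refine ContDiffOn.mul ?_ (hg.mono Ioo_subset_Ioc_self)
      exact fun x hx => (Real.contDiffAt_rpow_const_of_ne hx.1.ne').contDiffWithinAt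
    exact hcd.continuousOn_deriv_of_isOpen isOpen_Ioo (by simp)
  have hφc : Continuous φ := hφ.continuous
  have hvc : ContinuousOn v (Ioo (0:ℝ) 1) := by
    intro ξ hξ
    have hξ0 : (0:ℝ) < ξ := hξ.1
    have hφξ : 0 < φ ξ := hφpos ξ (Ioo_subset_Ioc_self hξ)
    simp only [hv, Vstar]
    refine ContinuousWithinAt.div ?_ ((hrc (m-1)) ξ hξ) (by positivity)
    refine ContinuousWithinAt.mul (ContinuousWithinAt.mul ?_ ((hrc (-k)) ξ hξ)) (hdc ξ hξ)
    exact ((hφc.continuousAt.rpow_const (Or.inl hφξ.ne')).neg).continuousWithinAt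
  have huc : ContinuousOn u (Ioo (0:ℝ) 1) := by
    refine ContinuousOn.pow ?_ 2
    exact hgc.div (hrc m) (fun ξ hξ => by have := hξ.1; positivity)
  have hD'c : ContinuousOn D' (Ioo (0:ℝ) 1) := by
    refine ContinuousOn.sub (continuousOn_const.mul huc) ?_
    refine ContinuousOn.mul (ContinuousOn.mul ?_ ?_) hvc
    · exact continuousOn_const.mul (hgc.div (hrc m) (fun ξ hξ => by have := hξ.1; positivity))
    · intro ξ hξ
      have hξ0 : (0:ℝ) < ξ := hξ.1
      have hφξ : 0 < φ ξ := hφpos ξ (Ioo_subset_Ioc_self hξ)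
      have hne : ξ / φ ξ ≠ 0 := by positivity
      exact ((continuousAt_id.div hφc.continuousAt hφξ.ne').rpow_const
        (Or.inl hne)).continuousWithinAt
  set B₂ : ℝ := ∫ ξ in Ioo (0:ℝ) 1, (Vstar k φ g ξ / ξ ^ (m - 1)) ^ 2 with hB₂
  have hB2nonneg : 0 ≤ B₂ := setIntegral_nonneg measurableSet_Ioo (fun x _ => sq_nonneg _)
  -- the key interval estimate
  have key : ∀ ε b : ℝ, 0 < ε → ε ≤ b → b < 1 →
      (∫ x in Ioc ε b, u x) ≤ (2/p) * F b + ((2/p)*s)^2 * B₂ := by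
    intro ε b hε hεb hb1
    have hsub : Icc ε b ⊆ Ioo (0:ℝ) 1 := fun x hx =>
      ⟨lt_of_lt_of_le hε hx.1, lt_of_le_of_lt hx.2 hb1⟩
    have hsub' : uIcc ε b ⊆ Ioo (0:ℝ) 1 := by rw [uIcc_of_le hεb]; exact hsub
    have hui : IntervalIntegrable u volume ε b := (huc.mono hsub').intervalIntegrable
    have hv2i : IntervalIntegrable (fun ξ => (v ξ)^2) volume ε b :=
      ((hvc.pow 2).mono hsub').intervalIntegrable
    have hD'i : IntervalIntegrable D' volume ε b := (hD'c.mono hsub').intervalIntegrable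
    have hftc : ∫ x in ε..b, D' x = F b - F ε :=
      intervalIntegral.integral_eq_sub_of_hasDerivAt
        (fun x hx => key_deriv x (hsub' hx)) hD'i
    have hpt : ∀ x ∈ Icc ε b, p/2 * u x ≤ D' x + 2/p * s^2 * (v x)^2 := by
      intro x hx
      have hxI := hsub hx
      have hx0 : (0:ℝ) < x := hxI.1
      have hφx : 0 < φ x := hφpos x (Ioo_subset_Ioc_self hxI)
      have hw0 : 0 ≤ (x / φ x) ^ (2*k) := Real.rpow_nonneg (by positivity) _
      have hws : (x / φ x) ^ (2*k) ≤ s := by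
        rw [hsdef]
        exact Real.rpow_le_rpow (by positivity) (hS x (Ioo_subset_Ioc_self hxI))
          (by linarith)
      set a₁ : ℝ := g x / x ^ m
      have h1 : 2*(|a₁| * (s*|v x|)) ≤ p/2*|a₁|^2 + 2/p*(s*|v x|)^2 := young_aux p _ _ hp0
      have h2 : a₁ * ((x / φ x) ^ (2*k) * v x) ≤ |a₁| * (s * |v x|) := by
        calc a₁ * ((x / φ x) ^ (2*k) * v x) ≤ |a₁ * ((x / φ x) ^ (2*k) * v x)| := le_abs_self _
          _ = |a₁| * ((x / φ x) ^ (2*k) * |v x|) := by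
              rw [abs_mul, abs_mul, abs_of_nonneg hw0]
          _ ≤ |a₁| * (s * |v x|) := by
              have := mul_le_mul_of_nonneg_right hws (abs_nonneg (v x))
              exact mul_le_mul_of_nonneg_left this (abs_nonneg _)
      have hsq1 : |a₁|^2 = a₁^2 := sq_abs _
      have hsq2 : (s*|v x|)^2 = s^2 * (v x)^2 := by rw [mul_pow, sq_abs]
      have hD'x : D' x = p * u x - 2 * a₁ * ((x / φ x) ^ (2*k)) * v x := rfl
      have hux : u x = a₁^2 := rfl
      rw [hsq1, hsq2] at h1
      rw [hD'x, hux]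
      have h2' : 2 * a₁ * ((x / φ x) ^ (2*k)) * v x ≤ 2 * (|a₁| * (s * |v x|)) := by
        have e : 2 * a₁ * ((x / φ x) ^ (2*k)) * v x
            = 2 * (a₁ * ((x / φ x) ^ (2*k) * v x)) := by ring
        rw [e]
        linarith
      linarith
    have hmono : p/2 * ∫ x in ε..b, u x ≤ ∫ x in ε..b, (D' x + 2/p * s^2 * (v x)^2) := by
      rw [← intervalIntegral.integral_const_mul]
      exact intervalIntegral.integral_mono_on hεb (hui.const_mul _)
        (hD'i.add (hv2i.const_mul _)) hpt
    rw [intervalIntegral.integral_add hD'i (hv2i.const_mul _), hftc,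
      intervalIntegral.integral_const_mul] at hmono
    have hFε : 0 ≤ F ε := by
      have : (0:ℝ) ≤ ε ^ p := Real.rpow_nonneg hε.le p
      simp only [hF]; positivity
    have hvint_le : ∫ x in ε..b, (v x)^2 ≤ B₂ := by
      rw [intervalIntegral.integral_of_le hεb, hB₂]
      refine setIntegral_mono_set hint2 ?_ ?_
      · exact Eventually.of_forall (fun x => sq_nonneg _)
      · refine HasSubset.Subset.eventuallyLE (fun x hx => ?_)
        exact ⟨lt_of_le_of_lt hε.le hx.1, lt_of_le_of_lt hx.2 hb1⟩
    have hA : p/2 * ∫ x in ε..b, u x ≤ F b + 2/p * s^2 * B₂ := by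
      have h3 : 2/p * s^2 * ∫ x in ε..b, (v x)^2 ≤ 2/p * s^2 * B₂ := by
        refine mul_le_mul_of_nonneg_left hvint_le (by positivity)
      linarith
    have hIeq : ∫ x in Ioc ε b, u x = ∫ x in ε..b, u x :=
      (intervalIntegral.integral_of_le hεb).symm
    rw [hIeq]
    have h2p : (0:ℝ) < 2/p := by positivity
    have hone : (2/p) * (p/2) = 1 := by field_simp
    calc ∫ x in ε..b, u x = (2/p) * (p/2 * ∫ x in ε..b, u x) := by
          rw [← mul_assoc, hone, one_mul]
      _ ≤ (2/p) * (F b + 2/p * s^2 * B₂) := mul_le_mul_of_nonneg_left hA h2p.le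
      _ = (2/p) * F b + ((2/p)*s)^2 * B₂ := by ring
  -- sequences
  set a : ℕ → ℝ := fun n => ((n:ℝ)+2)⁻¹ with ha
  set b : ℕ → ℝ := fun n => 1 - ((n:ℝ)+2)⁻¹ with hb
  have ha_pos : ∀ n, 0 < a n := fun n => by simp only [ha]; positivity
  have ha_half : ∀ n, a n ≤ 1/2 := by
    intro n
    simp only [ha]
    rw [inv_le_comm₀ (by positivity) (by norm_num)]
    push_cast
    linarith [Nat.cast_nonneg (α := ℝ) n]
  have hab : ∀ n, a n ≤ b n := fun n => by
    have := ha_half n; simp only [ha, hb] at *; linarith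
  have hb1 : ∀ n, b n < 1 := fun n => by
    have := ha_pos n; simp only [ha, hb] at *; linarith
  have hb_pos : ∀ n, 0 < b n := fun n => lt_of_lt_of_le (ha_pos n) (hab n)
  have ha0 : Tendsto a atTop (𝓝 0) := by
    apply tendsto_inv_atTop_zero.comp
    exact tendsto_atTop_add_const_right atTop 2 tendsto_natCast_atTop_atTop
  have hbt : Tendsto b atTop (𝓝 1) := by
    have : Tendsto (fun n : ℕ => (1:ℝ) - a n) atTop (𝓝 (1 - 0)) :=
      Tendsto.sub tendsto_const_nhds ha0
    simpa using this
  -- F (b n) → 0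
  have hFb : Tendsto (fun n => F (b n)) atTop (𝓝 0) := by
    have hFc : ContinuousWithinAt F (Ioc (0:ℝ) 1) 1 := by
      refine ContinuousWithinAt.mul ?_ (ContinuousWithinAt.pow (ContinuousWithinAt.mul ?_
        (hg.continuousOn 1 ⟨one_pos, le_refl 1⟩)) 2)
      · exact (Real.continuousAt_rpow_const 1 p (Or.inl one_ne_zero)).continuousWithinAt
      · exact (Real.continuousAt_rpow_const 1 (-k) (Or.inl one_ne_zero)).continuousWithinAt
    have hbtn : Tendsto b atTop (𝓝[Ioc (0:ℝ) 1] 1) := by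
      rw [tendsto_nhdsWithin_iff]
      exact ⟨hbt, Eventually.of_forall (fun n => ⟨hb_pos n, (hb1 n).le⟩)⟩
    have := hFc.tendsto.comp hbtn
    have hF1 : F 1 = 0 := by simp [hF, hg1]
    rwa [hF1] at this
  -- integrability on each piece
  have hIccsub : ∀ n, Icc (a n) (b n) ⊆ Ioo (0:ℝ) 1 := fun n x hx =>
    ⟨lt_of_lt_of_le (ha_pos n) hx.1, lt_of_le_of_lt hx.2 (hb1 n)⟩
  have hIoc_int : ∀ n, IntegrableOn u (Ioc (a n) (b n)) := fun n =>
    ((huc.mono (hIccsub n)).integrableOn_Icc).mono_set Ioc_subset_Icc_self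
  -- eventual bound
  have hbound_ev : ∀ᶠ n in atTop, (∫ x in Ioc (a n) (b n), ‖u x‖) ≤
      (2/p) * 1 + ((2/p)*s)^2 * B₂ := by
    have hev : ∀ᶠ n in atTop, F (b n) ≤ 1 :=
      hFb.eventually (eventually_le_nhds one_pos)
    filter_upwards [hev] with n hn
    have hnorm : ∀ x, ‖u x‖ = u x := fun x => Real.norm_of_nonneg (sq_nonneg _)
    rw [show (fun x => ‖u x‖) = u from funext hnorm]
    calc (∫ x in Ioc (a n) (b n), u x) ≤ (2/p) * F (b n) + ((2/p)*s)^2 * B₂ :=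
          key (a n) (b n) (ha_pos n) (hab n) (hb1 n)
      _ ≤ (2/p) * 1 + ((2/p)*s)^2 * B₂ := by
          have : (2/p) * F (b n) ≤ (2/p) * 1 := mul_le_mul_of_nonneg_left hn (by positivity)
          linarith
  have hUint : IntegrableOn u (Ioc (0:ℝ) 1) :=
    integrableOn_Ioc_of_intervalIntegral_norm_bounded hIoc_int ha0 hbt hbound_ev
  have hUIoo : IntegrableOn u (Ioo (0:ℝ) 1) := hUint.mono_set Ioo_subset_Ioc_self
  refine ⟨hUIoo, ?_⟩
  -- integral limit
  have hcover : AECover (volume.restrict (Ioc (0:ℝ) 1)) atTop (fun n => Ioc (a n) (b n)) :=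
    aecover_Ioc_of_Ioc ha0 hbt
  have htend0 := hcover.integral_tendsto_of_countably_generated (f := u) hUint
  have hres : ∀ n, (∫ x in Ioc (a n) (b n), u x ∂(volume.restrict (Ioc (0:ℝ) 1)))
      = ∫ x in Ioc (a n) (b n), u x := by
    intro n
    rw [Measure.restrict_restrict measurableSet_Ioc, inter_eq_left.2]
    exact fun x hx => ⟨lt_of_le_of_lt (ha_pos n).le hx.1, le_trans hx.2 (hb1 n).le⟩
  have htend : Tendsto (fun n => ∫ x in Ioc (a n) (b n), u x) atTop
      (𝓝 (∫ x in Ioc (0:ℝ) 1, u x)) := by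
    have := htend0
    simp only [hres] at this
    exact this
  have hMtend : Tendsto (fun n => (2/p) * F (b n) + ((2/p)*s)^2 * B₂) atTop
      (𝓝 (((2/p)*s)^2 * B₂)) := by
    have h1 := (hFb.const_mul (2/p)).add (tendsto_const_nhds (x := ((2/p)*s)^2 * B₂))
    simpa using h1
  have hA_le : (∫ x in Ioc (0:ℝ) 1, u x) ≤ ((2/p)*s)^2 * B₂ := by
    refine le_of_tendsto_of_tendsto htend hMtend ?_
    exact Eventually.of_forall (fun n => key (a n) (b n) (ha_pos n) (hab n) (hb1 n))
  have hAeq : (∫ x in Ioo (0:ℝ) 1, u x) = ∫ x in Ioc (0:ℝ) 1, u x :=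
    (integral_Ioc_eq_integral_Ioo).symm
  have h1 : Real.sqrt (∫ x in Ioo (0:ℝ) 1, u x) ≤ Real.sqrt (((2/p)*s)^2 * B₂) := by
    rw [hAeq]; exact Real.sqrt_le_sqrt hA_le
  have h2 : Real.sqrt (((2/p)*s)^2 * B₂) = (2/p)*s * Real.sqrt B₂ := by
    rw [Real.sqrt_mul (sq_nonneg _), Real.sqrt_sq (by positivity)]
  have h3 : (0:ℝ) ≤ Real.sqrt (∫ ξ in Ioo (0:ℝ) 1, (g ξ / ξ ^ (m - 1)) ^ 2) :=
    Real.sqrt_nonneg _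
  calc Real.sqrt (∫ x in Ioo (0:ℝ) 1, u x) ≤ (2/p)*s * Real.sqrt B₂ := by rw [← h2]; exact h1
    _ ≤ 2/p * s * Real.sqrt B₂ + Real.sqrt (∫ ξ in Ioo (0:ℝ) 1, (g ξ / ξ ^ (m - 1)) ^ 2) := by
        linarith
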